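/- arXiv:1901.00164 — 2 statements merged into one kernel-verified Lean document; each statement's English description precedes it below -/
import Mathlib

section
/- Let G be a directed graph with V(G) = V(G_1) ∪ V(G_2) ∪ V(G_3) (disjoint), such that there are no edges (in either direction) between V(G_1) and V(G_3), where G_1, G_2, G_3 are the induced subgraphs on these vertex sets. Then minrank_q(G_1) + minrank_q(G_3) ≤ minrank_q(G) ≤ minrank_q(G_1) + minrank_q(G_2) + minrank_q(G_3). -/
/-- A matrix `A` fits a directed graph with edge relation `E` if it has 1's on the
diagonal and 0's at off-diagonal non-edges. -/
def Fits {V : Type*} {F : Type*} [Field F] (E : V → V → Prop)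
    (A : Matrix V V F) : Prop :=
  (∀ v, A v v = 1) ∧ ∀ u v, u ≠ v → ¬ E u v → A u v = 0

/-- The minrank over `F` of the directed graph with edge relation `E`. -/
noncomputable def minrank (F : Type*) [Field F] {V : Type*} [Fintype V]
    (E : V → V → Prop) : ℕ :=
  sInf {r | ∃ A : Matrix V V F, Fits E A ∧ A.rank = r}

/-!
Restricting a fitting matrix of `G` to
`V(G₁) ∪ V(G₃)` gives, since there are no edges between `G₁` and `G₃`, a block-diagonal
matrix whose blocks fit `G₁` and `G₃`; conversely, the block-diagonal matrix built from optimal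
fitting matrices of `G₁`, `G₂`, `G₃` fits `G`. Rank is additive on block-diagonal matrices and
does not increase on submatrices.
-/

open Matrix

theorem Submodule.finrank_prod {K M N : Type*} [DivisionRing K] [AddCommGroup M]
    [AddCommGroup N] [Module K M] [Module K N] (p : Submodule K M) (q : Submodule K N)
    [FiniteDimensional K p] [FiniteDimensional K q] :
    Module.finrank K (p.prod q) = Module.finrank K p + Module.finrank K q := by
  have hinj : Function.Injective (p.subtype.prodMap q.subtype) :=
    Prod.map_injective.mpr ⟨p.injective_subtype, q.injective_subtype⟩
  calc Module.finrank K (p.prod q)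
      = Module.finrank K (LinearMap.range (p.subtype.prodMap q.subtype)) := by
        rw [LinearMap.range_prodMap, p.range_subtype, q.range_subtype]
    _ = Module.finrank K (p × q) := LinearMap.finrank_range_of_inj hinj
    _ = Module.finrank K p + Module.finrank K q := Module.finrank_prod

theorem Matrix.rank_fromBlocks_zero_zero {F m n : Type*} [Field F] [Fintype m] [Fintype n]
    (A : Matrix m m F) (D : Matrix n n F) :
    (fromBlocks A 0 0 D).rank = A.rank + D.rank := by
  classical
  let b := (Pi.basisFun F m).prod (Pi.basisFun F n)
  have hblocks : LinearMap.toMatrix b b ((toLin' A).prodMap (toLin' D)) = fromBlocks A 0 0 D := by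
    rw [LinearMap.toMatrix_prodMap, LinearMap.toMatrix_eq_toMatrix',
      LinearMap.toMatrix_eq_toMatrix', LinearMap.toMatrix'_toLin', LinearMap.toMatrix'_toLin']
  rw [← hblocks, rank_eq_finrank_range_toLin _ b b, toLin_toMatrix, LinearMap.range_prodMap,
    Submodule.finrank_prod]
  rfl

theorem Set.injective_sumElim_val {α : Type*} {s t : Set α} (h : Disjoint s t) :
    Function.Injective (Sum.elim (Subtype.val : s → α) (Subtype.val : t → α)) :=
  Subtype.val_injective.sumElim Subtype.val_injective fun a b hab =>
    Set.disjoint_left.mp h a.2 (hab ▸ b.2)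

section Minrank

variable {F : Type*} [Field F] {V W α β : Type*}

theorem Fits.submatrix {E : V → V → Prop} {A : Matrix V V F} (hA : Fits E A) {f : W → V}
    (hf : f.Injective) : Fits (fun a b => E (f a) (f b)) (A.submatrix f f) :=
  ⟨fun a => hA.1 (f a), fun _ _ hab hE => hA.2 _ _ (hf.ne hab) hE⟩

theorem Fits.fromBlocks {E : α ⊕ β → α ⊕ β → Prop} {A : Matrix α α F} {D : Matrix β β F}
    (hA : Fits (fun a b => E (.inl a) (.inl b)) A) (hD : Fits (fun a b => E (.inr a) (.inr b)) D) :
    Fits E (fromBlocks A 0 0 D) := by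
  refine ⟨fun i => ?_, fun i j hij hE => ?_⟩
  · rcases i with a | b
    exacts [hA.1 a, hD.1 b]
  · rcases i with a | b <;> rcases j with a' | b'
    · exact hA.2 a a' (fun h => hij (congrArg _ h)) hE
    · rfl
    · rfl
    · exact hD.2 b b' (fun h => hij (congrArg _ h)) hE

theorem Fits.eq_fromBlocks {E : α ⊕ β → α ⊕ β → Prop} {A : Matrix (α ⊕ β) (α ⊕ β) F}
    (hA : Fits E A) (hE : ∀ a b, ¬ E (.inl a) (.inr b) ∧ ¬ E (.inr b) (.inl a)) :
    A = Matrix.fromBlocks (A.submatrix .inl .inl) 0 0 (A.submatrix .inr .inr) := by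
  ext (a | b) (a' | b')
  · rfl
  · exact hA.2 _ _ Sum.inl_ne_inr (hE a b').1
  · exact hA.2 _ _ Sum.inr_ne_inl (hE a' b).2
  · rfl

variable [Fintype V] [Fintype W] [Fintype α] [Fintype β]

theorem minrank_le_rank {E : V → V → Prop} {A : Matrix V V F} (hA : Fits E A) :
    minrank F E ≤ A.rank :=
  Nat.sInf_le ⟨A, hA, rfl⟩

theorem exists_fits_rank_eq_minrank (E : V → V → Prop) :
    ∃ A : Matrix V V F, Fits E A ∧ A.rank = minrank F E := by
  classical
  have hone : Fits E (1 : Matrix V V F) :=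
    ⟨fun v => one_apply_eq v, fun _ _ huv _ => one_apply_ne huv⟩
  exact Nat.sInf_mem (s := {r | ∃ A : Matrix V V F, Fits E A ∧ A.rank = r}) ⟨_, 1, hone, rfl⟩

theorem minrank_comap_le (E : V → V → Prop) {f : W → V} (hf : f.Injective) :
    minrank F (fun a b => E (f a) (f b)) ≤ minrank F E := by
  obtain ⟨A, hA, hrank⟩ := exists_fits_rank_eq_minrank (F := F) E
  calc minrank F (fun a b => E (f a) (f b)) ≤ (A.submatrix f f).rank :=
        minrank_le_rank (hA.submatrix hf)
    _ ≤ A.rank := rank_submatrix_le A f f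
    _ = minrank F E := hrank

theorem minrank_comap_equiv (E : V → V → Prop) (e : W ≃ V) :
    minrank F (fun a b => E (e a) (e b)) = minrank F E := by
  refine le_antisymm (minrank_comap_le E e.injective) ?_
  simpa only [e.apply_symm_apply] using
    minrank_comap_le (F := F) (fun a b => E (e a) (e b)) e.symm.injective

theorem minrank_sum_le_add (E : α ⊕ β → α ⊕ β → Prop) :
    minrank F E ≤
      minrank F (fun a b => E (.inl a) (.inl b)) + minrank F (fun a b => E (.inr a) (.inr b)) := by
  obtain ⟨A, hA, hrankA⟩ := exists_fits_rank_eq_minrank (F := F) fun a b => E (.inl a) (.inl b)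
  obtain ⟨D, hD, hrankD⟩ := exists_fits_rank_eq_minrank (F := F) fun a b => E (.inr a) (.inr b)
  calc minrank F E ≤ (fromBlocks A 0 0 D).rank := minrank_le_rank (hA.fromBlocks hD)
    _ = _ := by rw [rank_fromBlocks_zero_zero, hrankA, hrankD]

theorem add_minrank_le_minrank_sum (E : α ⊕ β → α ⊕ β → Prop)
    (hE : ∀ a b, ¬ E (.inl a) (.inr b) ∧ ¬ E (.inr b) (.inl a)) :
    minrank F (fun a b => E (.inl a) (.inl b)) + minrank F (fun a b => E (.inr a) (.inr b)) ≤
      minrank F E := by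
  obtain ⟨A, hA, hrank⟩ := exists_fits_rank_eq_minrank (F := F) E
  calc _ ≤ (A.submatrix .inl .inl).rank + (A.submatrix .inr .inr).rank :=
        add_le_add (minrank_le_rank (hA.submatrix Sum.inl_injective))
          (minrank_le_rank (hA.submatrix Sum.inr_injective))
    _ = A.rank := by rw [← rank_fromBlocks_zero_zero, ← hA.eq_fromBlocks hE]
    _ = minrank F E := hrank

end Minrank

theorem minrank_three_part_bounds {V : Type*} [Fintype V] {F : Type*} [Field F]
    (E : V → V → Prop) (S₁ S₂ S₃ : Set V)
    [DecidablePred (· ∈ S₁)] [DecidablePred (· ∈ S₂)] [DecidablePred (· ∈ S₃)]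
    (h12 : Disjoint S₁ S₂) (h13d : Disjoint S₁ S₃) (h23 : Disjoint S₂ S₃)
    (hcover : S₁ ∪ S₂ ∪ S₃ = Set.univ)
    (h13 : ∀ u ∈ S₁, ∀ v ∈ S₃, ¬ E u v ∧ ¬ E v u) :
    minrank F (fun u v : S₁ => E u.1 v.1) + minrank F (fun u v : S₃ => E u.1 v.1)
        ≤ minrank F E ∧
    minrank F E ≤ minrank F (fun u v : S₁ => E u.1 v.1)
        + minrank F (fun u v : S₂ => E u.1 v.1)
        + minrank F (fun u v : S₃ => E u.1 v.1) := by
  constructor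
  · let f := Sum.elim (Subtype.val : S₁ → V) (Subtype.val : S₃ → V)
    exact (add_minrank_le_minrank_sum (fun a b => E (f a) (f b))
      fun a b => h13 a a.2 b b.2).trans (minrank_comap_le E (Set.injective_sumElim_val h13d))
  · let g := Sum.elim (Subtype.val : S₁ → V) (Subtype.val : S₂ → V)
    let f := Sum.elim g (Subtype.val : S₃ → V)
    have hf : f.Bijective := by
      refine ⟨(Set.injective_sumElim_val h12).sumElim Subtype.val_injective ?_, fun v => ?_⟩
      · rintro (a | a) b (hab : (a : V) = b)
        exacts [Set.disjoint_left.mp h13d a.2 (hab ▸ b.2), Set.disjoint_left.mp h23 a.2 (hab ▸ b.2)]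
      · have hv : v ∈ S₁ ∪ S₂ ∪ S₃ := hcover ▸ Set.mem_univ v
        rcases hv with (hv | hv) | hv
        exacts [⟨.inl (.inl ⟨v, hv⟩), rfl⟩, ⟨.inl (.inr ⟨v, hv⟩), rfl⟩, ⟨.inr ⟨v, hv⟩, rfl⟩]
    calc minrank F E = minrank F (fun a b => E (f a) (f b)) :=
          (minrank_comap_equiv E (Equiv.ofBijective f hf)).symm
      _ ≤ minrank F (fun a b => E (g a) (g b)) + minrank F (fun u v : S₃ => E u.1 v.1) :=
          minrank_sum_le_add _
      _ ≤ _ := Nat.add_le_add_right (minrank_sum_le_add _) _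
end

section
/- Let G be a directed graph on K vertices and A a matrix over F_2 that fits G with rank equal to minrank_2(G). Then for every vertex subset S inducing an acyclic subgraph of G, the rows of A indexed by S are linearly independent over F_2. Consequently rank(A) ≥ MAIS(G). -/
/-- The induced subgraph on `S` has no directed cycle. -/
def IsAcyclicOn {V : Type*} (E : V → V → Prop) (S : Set V) : Prop :=
  ¬ ∃ (n : ℕ) (f : Fin (n + 2) → V), (∀ i, f i ∈ S) ∧ Function.Injective f ∧
      (∀ i : Fin (n + 1), E (f i.castSucc) (f i.succ)) ∧ E (f (Fin.last (n + 1))) (f 0)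

/-- Maximum acyclic induced subgraph size. -/
noncomputable def MAIS {V : Type*} [Fintype V] (E : V → V → Prop) : ℕ :=
  sSup {r | ∃ S : Finset V, IsAcyclicOn E ↑S ∧ S.card = r}

/-!
If `∑ g s • A s = 0` on an acyclic `S` with `g ≠ 0`, the support of `g` has a vertex `t`
without in-neighbours in the support (following in-neighbours inside a finite set would close
a directed cycle). In column `t` only the diagonal entry of row `t` survives, forcing `g t = 0`.
The rank bound follows since these rows form a submatrix of rank `|S|`.
-/

open Function

theorem Function.exists_mem_periodicPts {α : Type*} [Finite α] [Nonempty α] (g : α → α) :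
    ∃ c, c ∈ periodicPts g := by
  obtain ⟨x⟩ := ‹Nonempty α›
  obtain ⟨i, j, hne, heq⟩ := Finite.exists_ne_map_eq_of_infinite (g^[·] x)
  wlog hij : i < j generalizing i j
  · exact this j i hne.symm heq.symm (by omega)
  refine ⟨g^[i] x, mk_mem_periodicPts (n := j - i) (by omega) ?_⟩
  rw [IsPeriodicPt, IsFixedPt, ← iterate_add_apply, Nat.sub_add_cancel hij.le, heq]

/-- The cycle is the orbit of a periodic point of a chosen predecessor map, read backwards. -/
theorem exists_injective_cycle_of_forall_exists_rel {α : Type*} [Finite α] [Nonempty α]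
    {R : α → α → Prop} (h : ∀ a, ∃ b, b ≠ a ∧ R b a) :
    ∃ (n : ℕ) (f : Fin (n + 2) → α), Injective f ∧
      (∀ i : Fin (n + 1), R (f i.castSucc) (f i.succ)) ∧ R (f (Fin.last (n + 1))) (f 0) := by
  choose g hg_ne hg_rel using h
  obtain ⟨c, hc⟩ := exists_mem_periodicPts g
  have hm_pos : 0 < minimalPeriod g c := minimalPeriod_pos_of_mem_periodicPts hc
  have hm_ne_one : minimalPeriod g c ≠ 1 := fun h1 =>
    hg_ne c (minimalPeriod_eq_one_iff_isFixedPt.mp h1)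
  obtain ⟨n, hn⟩ : ∃ n, minimalPeriod g c = n + 2 := ⟨minimalPeriod g c - 2, by omega⟩
  refine ⟨n, fun i => g^[(Fin.rev i : ℕ)] c, ?_, fun i => ?_, ?_⟩
  · intro a b hab
    have hlt : ∀ i : Fin (n + 2), (Fin.rev i : ℕ) ∈ Set.Iio (minimalPeriod g c) := fun i => by
      simp only [Set.mem_Iio, hn, Fin.is_lt]
    exact Fin.rev_injective (Fin.ext (iterate_injOn_Iio_minimalPeriod (hlt a) (hlt b) hab))
  · simpa only [Fin.rev_castSucc, Fin.rev_succ, Fin.val_succ, Fin.val_castSucc,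
      iterate_succ_apply'] using hg_rel _
  · have hcycle : g (g^[n + 1] c) = c := by
      simpa only [hn, iterate_succ_apply'] using iterate_minimalPeriod (f := g) (x := c)
    simpa only [Fin.rev_last, Fin.rev_zero, Fin.val_zero, Fin.val_last, iterate_zero_apply,
      hcycle] using hg_rel (g^[n + 1] c)

theorem IsAcyclicOn.exists_forall_not_rel {V : Type*} {E : V → V → Prop} {S : Set V}
    (hS : IsAcyclicOn E S) {T : Finset V} (hTS : ↑T ⊆ S) (hT : T.Nonempty) :
    ∃ t ∈ T, ∀ s ∈ T, s ≠ t → ¬ E s t := by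
  by_contra! hpred
  have : Nonempty T := hT.to_subtype
  obtain ⟨n, f, hf_inj, hf_step, hf_last⟩ :=
    exists_injective_cycle_of_forall_exists_rel (R := fun s t : T => E s t) fun t => by
      obtain ⟨s, hs, hst, hE⟩ := hpred t t.2
      exact ⟨⟨s, hs⟩, fun h => hst (congrArg Subtype.val h), hE⟩
  exact hS ⟨n, fun i => f i, fun i => hTS (f i).2, Subtype.val_injective.comp hf_inj,
    hf_step, hf_last⟩

theorem Fits.linearIndepOn_of_isAcyclicOn {V F : Type*} [Field F] {E : V → V → Prop}
    {A : Matrix V V F} (hA : Fits E A) {S : Finset V} (hS : IsAcyclicOn E ↑S) :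
    LinearIndepOn F A.row ↑S := by
  classical
  rw [linearIndepOn_finset_iff]
  by_contra! ⟨g, hsum, hsupp⟩
  set T := S.filter (g · ≠ 0)
  obtain ⟨t, ht, ht_source⟩ := hS.exists_forall_not_rel (T := T)
    (Finset.coe_subset.mpr (Finset.filter_subset _ _))
    (by simpa [T, Finset.filter_nonempty_iff] using hsupp)
  obtain ⟨htS, hgt⟩ := Finset.mem_filter.mp ht
  have hcol : ∑ s ∈ S, g s * A s t = g t := by
    rw [Finset.sum_eq_single_of_mem t htS, hA.1, mul_one]
    intro s hs hst
    by_cases hgs : g s = 0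
    · rw [hgs, zero_mul]
    · rw [hA.2 s t hst (ht_source s (Finset.mem_filter.mpr ⟨hs, hgs⟩) hst), mul_zero]
  exact hgt (by simpa [Finset.sum_apply, hcol] using congrFun hsum t)

theorem Matrix.card_le_rank_of_linearIndepOn {m n R : Type*} [Field R] [Fintype n]
    {A : Matrix m n R} {S : Finset m} (hS : LinearIndepOn R A.row ↑S) : S.card ≤ A.rank := by
  have hrows : (A.submatrix ((↑) : S → m) id).rank = S.card := by
    have hS' : LinearIndependent R (A.submatrix ((↑) : S → m) id).row := hS
    rw [hS'.rank_matrix, Fintype.card_coe]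
  exact hrows ▸ rank_submatrix_le A _ _

theorem fitting_rows_indep_on_acyclic_general {V : Type*} [Fintype V]
    (E : V → V → Prop) (A : Matrix V V (ZMod 2))
    (hfit : Fits E A) :
    (∀ S : Finset V, IsAcyclicOn E ↑S →
        LinearIndependent (ZMod 2) (fun s : {x // x ∈ S} => A s.1)) ∧
    MAIS E ≤ A.rank := by
  refine ⟨fun S hS => hfit.linearIndepOn_of_isAcyclicOn hS, csSup_le' ?_⟩
  rintro r ⟨S, hS, rfl⟩
  exact Matrix.card_le_rank_of_linearIndepOn (hfit.linearIndepOn_of_isAcyclicOn hS)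

theorem fitting_rows_indep_on_acyclic {V : Type*} [Fintype V]
    (E : V → V → Prop) (A : Matrix V V (ZMod 2))
    (hfit : Fits E A) (hrank : A.rank = minrank (ZMod 2) E) :
    (∀ S : Finset V, IsAcyclicOn E ↑S →
        LinearIndependent (ZMod 2) (fun s : {x // x ∈ S} => A s.1)) ∧
    MAIS E ≤ A.rank :=
  fitting_rows_indep_on_acyclic_general E A hfit
end
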